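/- Let $(A_i(t))_{t\ge 0}$, $1\le i\le i_0$, be nondecreasing real-valued processes such that for every $i$, $A_i(0+)\le \varphi$ and all jumps satisfy $A_i(t+)-A_i(t-)\le \varphi$. Suppose $a,b>0$ with $a-b>\varphi$, and suppose that for all $0\le t\le t_0$, if $A_i(t)\le a$ for every $i$ then $A_i(t)\le b$ for every $i$. Then $A_i(t_0)\le a$ for all $1\le i\le i_0$. -/

import Mathlib

/-!
Continuous induction on `[0, t0]`. If all `A i` stay below `a` on `[0, t)`, then by hypothesis
they stay below `b` there, so `A i (t-) ≤ b`; a single jump adds at most `φ < a - b`, hence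
`A i (t+) < a`. This gives `A i t ≤ a`, and `A i < a` on a right neighbourhood of `t`.
-/

open Function Filter Topology Set

theorem isClosed_setOf_forall_Ico {α : Type*} [LinearOrder α] [TopologicalSpace α]
    [ClosedIicTopology α] (P : α → Prop) (x : α) :
    IsClosed {t | ∀ u ∈ Ico x t, P u} := by
  have : {t | ∀ u ∈ Ico x t, P u} = ⋂ u ∈ {u | x ≤ u ∧ ¬P u}, Iic u := by
    ext t
    simp only [mem_ofPred_eq, mem_Ico, mem_iInter, mem_Iic, and_imp]
    exact forall_congr' fun u => ⟨fun h hxu hPu => not_lt.1 fun hut => hPu (h hxu hut),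
      fun h hxu hut => by_contra fun hPu => (h hxu hPu).not_gt hut⟩
  rw [this]
  exact isClosed_biInter fun u _ => isClosed_Iic

theorem continuous_induction_Icc {α : Type*} [ConditionallyCompleteLinearOrder α]
    [TopologicalSpace α] [OrderTopology α] [DenselyOrdered α] {P : α → Prop} {x y : α}
    (hP : ∀ t ∈ Icc x y, (∀ u ∈ Ico x t, P u) → P t ∧ ∀ᶠ u in 𝓝[>] t, P u) :
    ∀ t ∈ Icc x y, P t := by
  set s := {t | ∀ u ∈ Ico x t, P u}
  have hx : x ∈ s := fun u hu => absurd hu.1 (not_le.2 hu.2)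
  have hgt : ∀ t ∈ s ∩ Ico x y, s ∈ 𝓝[>] t := by
    rintro t ⟨ht, htx, hty⟩
    obtain ⟨hPt, hright⟩ := hP t ⟨htx, hty.le⟩ ht
    obtain ⟨m, htm, hm⟩ := (mem_nhdsGT_iff_exists_Ioo_subset' hty).1 hright
    refine (mem_nhdsGT_iff_exists_Ioo_subset' hty).2 ⟨m, htm, fun v hv u hu => ?_⟩
    rcases lt_trichotomy u t with hut | rfl | htu
    · exact ht u ⟨hu.1, hut⟩
    · exact hPt
    · exact hm ⟨htu, hu.2.trans hv.2⟩
  have hs : Icc x y ⊆ s :=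
    ((isClosed_setOf_forall_Ico P x).inter isClosed_Icc).Icc_subset_of_forall_mem_nhdsWithin hx hgt
  exact fun t ht => (hP t ht (hs ht)).1

namespace Monotone

variable {f : ℝ → ℝ} {φ b t : ℝ}

theorem leftLim_le_of_forall_Ioo {x : ℝ} (hf : Monotone f) (hxt : x < t)
    (h : ∀ s ∈ Ioo x t, f s ≤ b) : leftLim f t ≤ b :=
  _root_.le_of_tendsto (hf.tendsto_leftLim t) (eventually_of_mem (Ioo_mem_nhdsLT hxt) h)

theorem rightLim_le_add_of_forall_Ico (hf : Monotone f) (hinit : rightLim f 0 ≤ φ)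
    (hjump : ∀ t : ℝ, 0 < t → rightLim f t - leftLim f t ≤ φ) (hb : 0 ≤ b) (ht : 0 ≤ t)
    (h : ∀ s ∈ Ico 0 t, f s ≤ b) : rightLim f t ≤ b + φ := by
  rcases ht.eq_or_lt with rfl | ht
  · linarith
  · have := hf.leftLim_le_of_forall_Ioo ht fun s hs => h s ⟨hs.1.le, hs.2⟩
    linarith [hjump t ht]

end Monotone

theorem escape_little_lemma_general (i0 : ℕ) (A : Fin i0 → ℝ → ℝ) (φ a b t0 : ℝ)
    (hb : 0 < b) (hab : φ < a - b) (ht0 : 0 < t0)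
    (hmono : ∀ i, Monotone (A i))
    (hinit : ∀ i, Function.rightLim (A i) 0 ≤ φ)
    (hjump : ∀ i, ∀ t : ℝ, 0 < t →
      Function.rightLim (A i) t - Function.leftLim (A i) t ≤ φ)
    (hstep : ∀ t : ℝ, 0 ≤ t → t ≤ t0 → (∀ i, A i t ≤ a) → ∀ i, A i t ≤ b) :
    ∀ i, A i t0 ≤ a := by
  refine continuous_induction_Icc (P := fun t => ∀ i, A i t ≤ a) (fun t ht hbefore => ?_) t0
    ⟨ht0.le, le_rfl⟩
  have hright : ∀ i, rightLim (A i) t < a := fun i =>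
    ((hmono i).rightLim_le_add_of_forall_Ico (hinit i) (hjump i) hb.le ht.1
      fun s hs => hstep s hs.1 (hs.2.le.trans ht.2) (hbefore s hs) i).trans_lt (by linarith)
  refine ⟨fun i => ((hmono i).le_rightLim le_rfl).trans (hright i).le, ?_⟩
  exact eventually_all.2 fun i =>
    ((hmono i).tendsto_rightLim t).eventually_lt_const (hright i) |>.mono fun _ => le_of_lt

theorem escape_little_lemma (i0 : ℕ) (A : Fin i0 → ℝ → ℝ) (φ a b t0 : ℝ)
    (hφ : 0 ≤ φ) (ha : 0 < a) (hb : 0 < b) (hab : φ < a - b) (ht0 : 0 < t0)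
    (hmono : ∀ i, Monotone (A i))
    (hinit : ∀ i, Function.rightLim (A i) 0 ≤ φ)
    (hjump : ∀ i, ∀ t : ℝ, 0 < t →
      Function.rightLim (A i) t - Function.leftLim (A i) t ≤ φ)
    (hstep : ∀ t : ℝ, 0 ≤ t → t ≤ t0 → (∀ i, A i t ≤ a) → ∀ i, A i t ≤ b) :
    ∀ i, A i t0 ≤ a :=
  escape_little_lemma_general i0 A φ a b t0 hb hab ht0 hmono hinit hjump hstep
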